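/- arXiv:0711.3865 — 2 statements merged into one kernel-verified Lean document; each statement's English description precedes it below -/
import Mathlib

section
/- Let Ω be an algebraically closed field of characteristic p > 0, E a subfield of Ω, and a = (a₁,…,a_n) a tuple of elements of Ω each of which is algebraic over E. Let S be the orbit of a under the group of E-automorphisms of Ω acting coordinatewise. Then S is finite, and there exists r ≥ 0 such that for every coefficient c of the polynomial ∏_{s ∈ S} (X₀ + s₁X₁ + ⋯ + s_nX_n), regarded as a polynomial in the n+1 variables X₀, X₁, …, X_n with coefficients in Ω, one has c^{p^r} ∈ E. -/
/-!
An `E`-automorphism of `Ω` sends each `aᵢ` to a root of its minimal polynomial, so the orbit of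
`a` is finite. The orbit is stable under every `E`-automorphism `σ`, so applying `σ` to the
coefficients of the code polynomial permutes its linear factors: the coefficients are fixed by
`Aut(Ω/E)`. They are also algebraic over `E`, being polynomials in the algebraic `sᵢ`. Since
`Ω` is algebraically closed, every `E`-automorphism of the algebraic closure of `E` in `Ω`
extends to `Ω` (through a transcendence basis), so a fixed algebraic element has no conjugate
other than itself. Its minimal polynomial then has separable degree one, i.e. some
`p ^ r`-th power of it lies in `E`; finitely many coefficients allow one common `r`.
-/

open MvPolynomial

section CodePolynomial

variable {K : Type*} [CommRing K] {n : ℕ}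

noncomputable def codePolynomial (S : Finset (Fin n → K)) : MvPolynomial (Fin (n + 1)) K :=
  ∏ s ∈ S, (X 0 + ∑ i, C (s i) * X i.succ)

theorem map_codePolynomial {L : Type*} [CommRing L] {f : K →+* L} (hf : Function.Injective f)
    (S : Finset (Fin n → K)) :
    map f (codePolynomial S) = codePolynomial (S.map ⟨(f ∘ ·), hf.comp_left⟩) := by
  simp [codePolynomial, Finset.prod_map]

theorem coeff_codePolynomial_mem (R : Subring K) {S : Finset (Fin n → K)}
    (hS : ∀ s ∈ S, ∀ i, s i ∈ R) (d : Fin (n + 1) →₀ ℕ) :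
    coeff d (codePolynomial S) ∈ R := by
  obtain ⟨Q, hQ⟩ : codePolynomial S ∈ (map R.subtype).range :=
    prod_mem fun s hs => add_mem ⟨X 0, map_X _ _⟩
      (sum_mem fun i _ => ⟨C ⟨s i, hS s hs i⟩ * X i.succ, by simp⟩)
  rw [← hQ, coeff_map]
  exact (Q.coeff d).2

theorem coeff_codePolynomial_eq_of_map_eq (σ : K ≃+* K) {S : Finset (Fin n → K)}
    (hS : S.map ⟨(σ ∘ ·), σ.injective.comp_left⟩ = S) (d : Fin (n + 1) →₀ ℕ) :
    σ (coeff d (codePolynomial S)) = coeff d (codePolynomial S) := by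
  rw [← RingEquiv.coe_toRingHom, ← coeff_map, map_codePolynomial σ.injective]
  exact congrArg _ (congrArg _ hS)

end CodePolynomial

section Orbit

open MulAction

variable {F K : Type*} [Field F] [Field K] [Algebra F K] {n : ℕ}

theorem orbit_finite_of_isAlgebraic {a : Fin n → K} (ha : ∀ i, IsAlgebraic F (a i)) :
    (orbit (K ≃ₐ[F] K) a).Finite := by
  refine (Set.Finite.pi fun i => (minpoly F (a i)).rootSet_finite K).subset ?_
  rintro _ ⟨σ, rfl⟩ i -
  exact Polynomial.mem_rootSet.2
    ⟨minpoly.ne_zero (ha i).isIntegral, (isConjRoot_of_algEquiv (a i) σ).aeval_eq_zero⟩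

variable {a : Fin n → K} (hS : (orbit (K ≃ₐ[F] K) a).Finite)

theorem algEquiv_coeff_codePolynomial_orbit (σ : K ≃ₐ[F] K) (d : Fin (n + 1) →₀ ℕ) :
    σ (coeff d (codePolynomial hS.toFinset)) = coeff d (codePolynomial hS.toFinset) := by
  refine coeff_codePolynomial_eq_of_map_eq σ.toRingEquiv (Finset.coe_injective ?_) d
  rw [Finset.coe_map, Set.Finite.coe_toFinset]
  exact smul_orbit σ a

theorem coeff_codePolynomial_orbit_mem_algebraicClosure (ha : ∀ i, IsAlgebraic F (a i))
    (d : Fin (n + 1) →₀ ℕ) :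
    coeff d (codePolynomial hS.toFinset) ∈ algebraicClosure F K := by
  refine coeff_codePolynomial_mem (algebraicClosure F K).toSubfield.toSubring (fun s hs i => ?_) d
  obtain ⟨σ, rfl⟩ := hS.mem_toFinset.1 hs
  exact mem_algebraicClosure_iff.2
    ((isConjRoot_of_algEquiv (a i) σ).isIntegral (ha i).isIntegral).isAlgebraic

end Orbit

section IsAlgClosed

variable {F K : Type*} [Field F] [Field K] [IsAlgClosed K] [Algebra F K]

theorem IsAlgClosed.exists_ringEquiv_extend (σ : F ≃+* F) :
    ∃ g : K ≃+* K, ∀ z : F, g (algebraMap F K z) = algebraMap F K (σ z) := by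
  -- `K` is an algebraic closure of `F[s] ≃ F[X_s]` for a transcendence basis `s`; let `σ` act on
  -- the coefficients of `F[X_s]` and extend by uniqueness of algebraic closures.
  obtain ⟨s, hs⟩ := exists_isTranscendenceBasis F K
  have := IsAlgClosed.isAlgClosure_of_transcendence_basis _ hs
  let A := Algebra.adjoin F (Set.range ((↑) : s → K))
  have : Module.IsTorsionFree A K :=
    Module.isTorsionFree_iff_algebraMap_injective.2 Subtype.val_injective
  let e : A ≃+* A := hs.1.aevalEquiv.symm.toRingEquiv.trans
    ((mapEquiv _ σ).trans hs.1.aevalEquiv.toRingEquiv)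
  have he (z : F) : e (algebraMap F A z) = algebraMap F A (σ z) := by
    simpa [e, ← algebraMap_eq] using hs.1.aevalEquiv.commutes (σ z)
  refine ⟨IsAlgClosure.equivOfEquiv K K e, fun z => ?_⟩
  rw [IsScalarTower.algebraMap_apply F A K, IsAlgClosure.equivOfEquiv_algebraMap, he,
    ← IsScalarTower.algebraMap_apply]

theorem IsConjRoot.exists_algEquiv_of_isAlgClosed {x y : K} (hx : IsIntegral F x)
    (h : IsConjRoot F x y) : ∃ σ : K ≃ₐ[F] K, σ y = x := by
  let M := algebraicClosure F K
  have hxM : x ∈ M := mem_algebraicClosure_iff.2 hx.isAlgebraic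
  have hyM : y ∈ M := mem_algebraicClosure_iff.2 (h.isIntegral hx).isAlgebraic
  have hM : IsConjRoot F (⟨x, hxM⟩ : M) ⟨y, hyM⟩ := (isConjRoot_algHom_iff M.val).1 h
  obtain ⟨τ, hτ⟩ := hM.exists_algEquiv
  obtain ⟨g, hg⟩ := IsAlgClosed.exists_ringEquiv_extend (K := K) τ.toRingEquiv
  refine ⟨AlgEquiv.ofRingEquiv (f := g) fun c => ?_, ?_⟩
  · simpa using hg (algebraMap F M c)
  · simpa [hτ] using hg ⟨y, hyM⟩

theorem mem_perfectClosure_of_forall_algEquiv_apply_eq {x : K} (hx : IsIntegral F x)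
    (hfix : ∀ σ : K ≃ₐ[F] K, σ x = x) : x ∈ perfectClosure F K := by
  classical
  rw [mem_perfectClosure_iff_natSepDegree_eq_one,
    Polynomial.natSepDegree_eq_of_isAlgClosed (E := K), Finset.card_eq_one]
  refine ⟨x, Finset.eq_singleton_iff_unique_mem.2 ⟨?_, fun y hy => ?_⟩⟩
  · exact Multiset.mem_toFinset.2 ((isConjRoot_iff_mem_minpoly_aroots hx).1 IsConjRoot.refl)
  · have hxy := (isConjRoot_iff_mem_minpoly_aroots hx).2 (Multiset.mem_toFinset.1 hy)
    obtain ⟨σ, rfl⟩ := hxy.symm.exists_algEquiv_of_isAlgClosed (hxy.isIntegral hx)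
    exact hfix σ

end IsAlgClosed

theorem exists_pow_pow_mem_of_forall {M S : Type*} [Monoid M] [SetLike S M] [SubmonoidClass S M]
    (s : S) (q : ℕ) (T : Finset M) (h : ∀ x ∈ T, ∃ r, x ^ q ^ r ∈ s) :
    ∃ r, ∀ x ∈ T, x ^ q ^ r ∈ s := by
  choose! r hr using h
  refine ⟨T.sup r, fun x hx => ?_⟩
  obtain ⟨k, hk⟩ := Nat.exists_eq_add_of_le (Finset.le_sup (f := r) hx)
  rw [hk, pow_add, pow_mul]
  exact pow_mem (hr x hx) _

theorem Subfield.setOf_ringEquiv_fixing_eq_orbit {K : Type*} [Field K] (E : Subfield K)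
    {n : ℕ} (a : Fin n → K) :
    {s : Fin n → K | ∃ g : K ≃+* K, (∀ x ∈ E, g x = x) ∧ ∀ i, s i = g (a i)} =
      MulAction.orbit (K ≃ₐ[E] K) a := by
  ext s
  constructor
  · rintro ⟨g, hg, hs⟩
    exact ⟨AlgEquiv.ofRingEquiv (f := g) fun x => hg x x.2, funext fun i => (hs i).symm⟩
  · rintro ⟨σ, rfl⟩
    exact ⟨σ.toRingEquiv, fun x hx => σ.commutes ⟨x, hx⟩, fun i => rfl⟩

/-- Let `Ω` be an algebraically closed field of characteristic `p > 0`, `E` a subfield,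
and `a = (a₁,…,aₙ)` a tuple of elements of `Ω`, each algebraic over `E`.  Then the
orbit `S` of `a` under the group of `E`-automorphisms of `Ω` (acting coordinatewise) is
finite, and there is `r ≥ 0` such that the `pʳ`-th power of every coefficient of the
polynomial `∏_{s ∈ S} (X₀ + s₁X₁ + ⋯ + sₙXₙ)` lies in `E`. -/
theorem code_pow_mem_base_of_algebraic (p : ℕ) [Fact p.Prime]
    {Ω : Type*} [Field Ω] [IsAlgClosed Ω] [CharP Ω p]
    (E : Subfield Ω) (n : ℕ) (a : Fin n → Ω) (ha : ∀ i, IsAlgebraic ↥E (a i)) :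
    ∃ hS : {s : Fin n → Ω |
        ∃ g : Ω ≃+* Ω, (∀ x ∈ E, g x = x) ∧ ∀ i, s i = g (a i)}.Finite,
      ∃ r : ℕ, ∀ d : Fin (n + 1) →₀ ℕ,
        (MvPolynomial.coeff d
          (∏ s ∈ hS.toFinset,
            (X 0 + ∑ i : Fin n, MvPolynomial.C (s i) * X i.succ))) ^ p ^ r ∈ E := by
  rw [E.setOf_ringEquiv_fixing_eq_orbit a]
  have hS := orbit_finite_of_isAlgebraic ha
  refine ⟨hS, ?_⟩
  change ∃ r, ∀ d, coeff d (codePolynomial hS.toFinset) ^ p ^ r ∈ E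
  set P := codePolynomial hS.toFinset
  have : ExpChar E p := ExpChar.prime Fact.out
  have hpow (d) : ∃ r, coeff d P ^ p ^ r ∈ E := by
    have hintegral := (mem_algebraicClosure_iff.1
      (coeff_codePolynomial_orbit_mem_algebraicClosure hS ha d)).isIntegral
    obtain ⟨r, c, hc⟩ := (mem_perfectClosure_iff_pow_mem p).1
      (mem_perfectClosure_of_forall_algEquiv_apply_eq hintegral
        fun σ => algEquiv_coeff_codePolynomial_orbit hS σ d)
    exact ⟨r, hc ▸ c.2⟩
  obtain ⟨r, hr⟩ := exists_pow_pow_mem_of_forall E p P.coeffs fun c hc => by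
    obtain ⟨d, -, rfl⟩ := mem_coeffs_iff.1 hc
    exact hpow d
  refine ⟨r, fun d => ?_⟩
  by_cases hd : coeff d P = 0
  · rw [hd, zero_pow (pow_ne_zero _ (Fact.out : p.Prime).ne_zero)]
    exact zero_mem E
  · exact hr _ (coeff_mem_coeffs d hd)
end

section
/- Let U be a field with a ring automorphism σ and K a subfield of U with σ(K) = K. Let a be a finite tuple of elements of U each of which is algebraic over K. Then ld(a/K) = ild(a/K). -/
/-- The subfield `K(a, σ(a), …, σᵏ(a))` of `U` generated by `K` and the first `k + 1`
transforms of the tuple `a` under `σ`. -/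
def segField {U : Type*} [Field U] (K : Subfield U) (σ : U ≃+* U) {n : ℕ}
    (a : Fin n → U) (k : ℕ) : Subfield U :=
  Subfield.closure ((K : Set U) ∪ {x | ∃ j ≤ k, ∃ i, x = (⇑σ)^[j] (a i)})

/-- The degree `[F : E]` of an extension of subfields of a field (equal to `0` if
`E ≰ F` or if the extension is infinite). -/
noncomputable def fieldDeg {Ω : Type*} [Field Ω] (E F : Subfield Ω) : ℕ :=
  letI := Classical.dec (E ≤ F)
  if h : E ≤ F then
    letI := (Subfield.inclusion h).toAlgebra
    Module.finrank ↥E ↥F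
  else 0

/-- The sequence of degrees `dₖ = [K(a,…,σ^{k+1}(a)) : K(a,…,σᵏ(a))]`, whose eventual
value is the limit degree `ld(a/K)`.  Applied to `σ⁻¹` it gives the sequence whose
eventual value is the inverse limit degree `ild(a/K)`. -/
noncomputable def ldSeq {U : Type*} [Field U] (K : Subfield U) (σ : U ≃+* U) {n : ℕ}
    (a : Fin n → U) : ℕ → ℕ :=
  fun k => fieldDeg (segField K σ a k) (segField K σ a (k + 1))

/-- `l` is the eventual value of the sequence `d`. -/
def IsEventualValue (d : ℕ → ℕ) (l : ℕ) : Prop :=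
  ∃ N, ∀ k ≥ N, d k = l

/-!
Write `Fₖ = K(a, σa, …, σᵏa)`. Since `σK = K`, we have `F_{k+1} = Fₖ ⊔ σFₖ`, and `σᵏ` carries
`K(a, σ⁻¹a, …, σ⁻ᵏa)` onto `Fₖ`; hence the `k`-th inverse degree is `[F_{k+1} : σFₖ]`.
The fields `Fₖ` and `σFₖ` have the same finite degree over `K`, so by the tower law this is
`[F_{k+1} : Fₖ]`: the two degree sequences agree termwise. They are nonincreasing because
`F_{k+2} = F_{k+1} ⊔ σF_{k+1}` with `σFₖ ≤ F_{k+1}`, and the degree of a compositum over the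
larger base is at most `[σF_{k+1} : σFₖ] = [F_{k+1} : Fₖ]`.
-/
section FieldDeg

variable {U : Type*} [Field U]

theorem fieldDeg_toSubfield {E : Subfield U} (L : IntermediateField E U) :
    fieldDeg E L.toSubfield = Module.finrank E L := by
  have h : E ≤ L.toSubfield := fun x hx => L.algebraMap_mem ⟨x, hx⟩
  rw [fieldDeg, dif_pos h]
  rfl

theorem fieldDeg_of_not_le {E F : Subfield U} (h : ¬ E ≤ F) : fieldDeg E F = 0 := by
  rw [fieldDeg, dif_neg h]

theorem fieldDeg_mul {E F G : Subfield U} (hEF : E ≤ F) (hFG : F ≤ G) :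
    fieldDeg E G = fieldDeg E F * fieldDeg F G := by
  let := (Subfield.inclusion hEF).toAlgebra
  let := (Subfield.inclusion hFG).toAlgebra
  let := (Subfield.inclusion (hEF.trans hFG)).toAlgebra
  have : IsScalarTower E F G := IsScalarTower.of_algebraMap_eq fun _ => rfl
  simp only [fieldDeg, dif_pos hEF, dif_pos hFG, dif_pos (hEF.trans hFG)]
  exact (Module.finrank_mul_finrank E F G).symm

theorem Subfield.map_le_map_iff {V : Type*} [Field V] (f : U →+* V) {E F : Subfield U} :
    E.map f ≤ F.map f ↔ E ≤ F := by
  rw [Subfield.map_le_iff_le_comap, Subfield.comap_map]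

theorem fieldDeg_map (e : U ≃+* U) (E F : Subfield U) :
    fieldDeg (E.map (e : U →+* U)) (F.map (e : U →+* U)) = fieldDeg E F := by
  by_cases h : E ≤ F
  · have h' := (Subfield.map_le_map_iff (e : U →+* U)).2 h
    let := (Subfield.inclusion h).toAlgebra
    let := (Subfield.inclusion h').toAlgebra
    simp only [fieldDeg, dif_pos h, dif_pos h']
    exact (Algebra.finrank_eq_of_equiv_equiv (E.toSubring.equivMapOfInjective _ e.injective)
      (F.toSubring.equivMapOfInjective _ e.injective) (by ext; rfl)).symm
  · rw [fieldDeg_of_not_le h, fieldDeg_of_not_le (mt (Subfield.map_le_map_iff (e : U →+* U)).1 h)]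

theorem fieldDeg_map_of_map_eq (e : U ≃+* U) {K : Subfield U} (hK : K.map (e : U →+* U) = K)
    (E : Subfield U) : fieldDeg K (E.map (e : U →+* U)) = fieldDeg K E := by
  conv_lhs => rw [← hK]
  exact fieldDeg_map e K E

theorem fieldDeg_sup_le {E F₁ F₂ : Subfield U} (h₁ : E ≤ F₁) (h₂ : E ≤ F₂) :
    fieldDeg E (F₁ ⊔ F₂) ≤ fieldDeg E F₁ * fieldDeg E F₂ := by
  let L₁ : IntermediateField E U := F₁.toIntermediateField fun x => h₁ x.2
  let L₂ : IntermediateField E U := F₂.toIntermediateField fun x => h₂ x.2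
  have hsup : F₁ ⊔ F₂ = (L₁ ⊔ L₂).toSubfield := (IntermediateField.sup_toSubfield L₁ L₂).symm
  rw [hsup, fieldDeg_toSubfield]
  exact IntermediateField.finrank_sup_le L₁ L₂ |>.trans_eq
    (by rw [← fieldDeg_toSubfield L₁, ← fieldDeg_toSubfield L₂]; rfl)

theorem fieldDeg_sup_ne_zero {E F₁ F₂ : Subfield U} (h₁ : E ≤ F₁) (h₂ : E ≤ F₂)
    (hF₁ : fieldDeg E F₁ ≠ 0) (hF₂ : fieldDeg E F₂ ≠ 0) : fieldDeg E (F₁ ⊔ F₂) ≠ 0 := by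
  let L₁ : IntermediateField E U := F₁.toIntermediateField fun x => h₁ x.2
  let L₂ : IntermediateField E U := F₂.toIntermediateField fun x => h₂ x.2
  have : FiniteDimensional E L₁ :=
    .of_finrank_pos (Nat.pos_of_ne_zero (fieldDeg_toSubfield L₁ ▸ hF₁))
  have : FiniteDimensional E L₂ :=
    .of_finrank_pos (Nat.pos_of_ne_zero (fieldDeg_toSubfield L₂ ▸ hF₂))
  have hsup : F₁ ⊔ F₂ = (L₁ ⊔ L₂).toSubfield := (IntermediateField.sup_toSubfield L₁ L₂).symm
  rw [hsup, fieldDeg_toSubfield]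
  exact Module.finrank_pos.ne'

theorem fieldDeg_closure_union_range_ne_zero (K : Subfield U) {ι : Type*} [Finite ι]
    {a : ι → U} (halg : ∀ i, IsAlgebraic K (a i)) :
    fieldDeg K (Subfield.closure (K ∪ Set.range a)) ≠ 0 := by
  have hadj : Subfield.closure (K ∪ Set.range a) =
      (IntermediateField.adjoin K (Set.range a)).toSubfield := by
    rw [IntermediateField.adjoin_toSubfield]
    exact congrArg (fun s => Subfield.closure (s ∪ Set.range a)) Subtype.range_coe.symm
  have := IntermediateField.finiteDimensional_adjoin (K := K) (S := Set.range a)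
    (by rintro _ ⟨i, rfl⟩; exact (halg i).isIntegral)
  rw [hadj, fieldDeg_toSubfield]
  exact Module.finrank_pos.ne'

theorem fieldDeg_eq_of_fieldDeg_eq {K E E' F : Subfield U} (hE : K ≤ E) (hE' : K ≤ E')
    (hEF : E ≤ F) (hE'F : E' ≤ F) (hdeg : fieldDeg K E = fieldDeg K E')
    (hne : fieldDeg K E ≠ 0) : fieldDeg E F = fieldDeg E' F := by
  have h := (fieldDeg_mul hE hEF).symm.trans (fieldDeg_mul hE' hE'F)
  rw [hdeg] at h hne
  exact Nat.eq_of_mul_eq_mul_left (Nat.pos_of_ne_zero hne) h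

theorem fieldDeg_sup_le_of_le {E E' L : Subfield U} (hE' : E ≤ E') (hL : E ≤ L)
    (hne : fieldDeg E E' ≠ 0) : fieldDeg E' (E' ⊔ L) ≤ fieldDeg E L := by
  have h := fieldDeg_mul hE' (le_sup_left : E' ≤ E' ⊔ L) ▸ fieldDeg_sup_le hE' hL
  exact Nat.le_of_mul_le_mul_left h (Nat.pos_of_ne_zero hne)

end FieldDeg

section OrbitSegment

variable {α ι : Type*} (f : α → α) (a : ι → α)

def orbitSegment (k : ℕ) : Set α :=
  {x | ∃ j ≤ k, ∃ i, x = f^[j] (a i)}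

theorem orbitSegment_zero : orbitSegment f a 0 = Set.range a := by
  ext x
  constructor
  · rintro ⟨j, hj, i, rfl⟩
    obtain rfl := Nat.le_zero.1 hj
    exact ⟨i, rfl⟩
  · rintro ⟨i, rfl⟩
    exact ⟨0, le_rfl, i, rfl⟩

theorem orbitSegment_succ (k : ℕ) :
    orbitSegment f a (k + 1) = orbitSegment f a k ∪ f '' orbitSegment f a k := by
  ext x
  constructor
  · rintro ⟨_ | j, hj, i, rfl⟩
    · exact Or.inl ⟨0, k.zero_le, i, rfl⟩
    · exact Or.inr ⟨f^[j] (a i), ⟨j, by omega, i, rfl⟩,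
        (Function.iterate_succ_apply' f j (a i)).symm⟩
  · rintro (⟨j, hj, i, rfl⟩ | ⟨_, ⟨j, hj, i, rfl⟩, rfl⟩)
    · exact ⟨j, by omega, i, rfl⟩
    · exact ⟨j + 1, by omega, i, (Function.iterate_succ_apply' f j (a i)).symm⟩

theorem image_iterate_orbitSegment {g : α → α} (h : Function.LeftInverse g f) (k : ℕ) :
    g^[k] '' orbitSegment f a k = orbitSegment g a k := by
  have cancel : ∀ j ≤ k, ∀ x, g^[k] (f^[j] x) = g^[k - j] x := fun j hj x => by
    rw [← Nat.sub_add_cancel hj, Function.iterate_add_apply, (h.iterate j) x, Nat.add_sub_cancel]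
  ext x
  constructor
  · rintro ⟨_, ⟨j, hj, i, rfl⟩, rfl⟩
    exact ⟨k - j, k.sub_le j, i, cancel j hj (a i)⟩
  · rintro ⟨j, hj, i, rfl⟩
    refine ⟨f^[k - j] (a i), ⟨k - j, k.sub_le j, i, rfl⟩, ?_⟩
    rw [cancel (k - j) (k.sub_le j), Nat.sub_sub_self hj]

end OrbitSegment

theorem Subfield.map_closure_union {U V : Type*} [Field U] [Field V] (f : U →+* V)
    {K : Subfield U} {K' : Subfield V} (hK : f '' K = K') (S : Set U) :
    (Subfield.closure (K ∪ S)).map f = Subfield.closure (K' ∪ f '' S) := by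
  rw [RingHom.map_field_closure, Set.image_union, hK]

section SegField

variable {U : Type*} [Field U] (σ : U ≃+* U) (K : Subfield U) {n : ℕ} (a : Fin n → U)

theorem segField_eq_closure (k : ℕ) :
    segField K σ a k = Subfield.closure (K ∪ orbitSegment σ a k) := rfl

theorem le_segField (k : ℕ) : K ≤ segField K σ a k :=
  fun _ hx => Subfield.subset_closure (Or.inl hx)

variable {σ K} (hK : K.map (σ : U →+* U) = K)
include hK

theorem image_iterate_eq_of_map_eq (m : ℕ) : (⇑σ)^[m] '' K = K := by
  rw [Set.image_iterate_eq]
  refine Function.iterate_fixed ?_ m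
  rw [← RingEquiv.coe_toRingHom, ← Subfield.coe_map, hK]

theorem le_map_segField (k : ℕ) : K ≤ (segField K σ a k).map (σ : U →+* U) :=
  hK.symm.le.trans ((Subfield.map_le_map_iff _).2 (le_segField σ K a k))

theorem segField_succ (k : ℕ) :
    segField K σ a (k + 1) = segField K σ a k ⊔ (segField K σ a k).map (σ : U →+* U) := by
  rw [segField_eq_closure, segField_eq_closure,
    Subfield.map_closure_union _ (image_iterate_eq_of_map_eq hK 1), ← Subfield.closure_union,
    ← Set.union_union_distrib_left, orbitSegment_succ]
  rfl

theorem fieldDeg_segField_ne_zero (halg : ∀ i, IsAlgebraic K (a i)) (k : ℕ) :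
    fieldDeg K (segField K σ a k) ≠ 0 := by
  induction k with
  | zero =>
    rw [segField_eq_closure, orbitSegment_zero]
    exact fieldDeg_closure_union_range_ne_zero K halg
  | succ k ih =>
    rw [segField_succ a hK]
    exact fieldDeg_sup_ne_zero (le_segField σ K a k) (le_map_segField a hK k) ih
      (by rwa [fieldDeg_map_of_map_eq σ hK])

theorem map_pow_segField_symm (k : ℕ) :
    (segField K σ.symm a k).map ((σ ^ k : U ≃+* U) : U →+* U) = segField K σ a k := by
  rw [segField_eq_closure,
    Subfield.map_closure_union _ (by simpa using image_iterate_eq_of_map_eq hK k)]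
  simp only [RingEquiv.coe_toRingHom, RingAut.coe_pow]
  rw [image_iterate_orbitSegment _ _ σ.apply_symm_apply]
  rfl

theorem ldSeq_symm_eq_fieldDeg_map (k : ℕ) :
    ldSeq K σ.symm a k =
      fieldDeg ((segField K σ a k).map (σ : U →+* U)) (segField K σ a (k + 1)) := by
  have hcomp : ((σ ^ (k + 1) : U ≃+* U) : U →+* U) = (σ : U →+* U).comp (σ ^ k : U ≃+* U) := by
    rw [pow_succ']
    rfl
  rw [ldSeq, ← fieldDeg_map (σ ^ (k + 1)), map_pow_segField_symm a hK, hcomp,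
    ← Subfield.map_map, map_pow_segField_symm a hK]

theorem segField_le_succ (k : ℕ) : segField K σ a k ≤ segField K σ a (k + 1) :=
  (segField_succ a hK k).ge.trans' le_sup_left

theorem map_segField_le_succ (k : ℕ) :
    (segField K σ a k).map (σ : U →+* U) ≤ segField K σ a (k + 1) :=
  (segField_succ a hK k).ge.trans' le_sup_right

variable (halg : ∀ i, IsAlgebraic K (a i))
include halg

theorem ldSeq_symm_eq : ldSeq K σ.symm a = ldSeq K σ a := by
  funext k
  rw [ldSeq_symm_eq_fieldDeg_map a hK]
  exact (fieldDeg_eq_of_fieldDeg_eq (le_segField σ K a k) (le_map_segField a hK k)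
    (segField_le_succ a hK k) (map_segField_le_succ a hK k)
    (fieldDeg_map_of_map_eq σ hK _).symm (fieldDeg_segField_ne_zero a hK halg k)).symm

theorem ldSeq_succ_le (k : ℕ) : ldSeq K σ a (k + 1) ≤ ldSeq K σ a k := by
  have hne : fieldDeg ((segField K σ a k).map (σ : U →+* U)) (segField K σ a (k + 1)) ≠ 0 :=
    right_ne_zero_of_mul <| fieldDeg_mul (le_map_segField a hK k) (map_segField_le_succ a hK k)
      ▸ fieldDeg_segField_ne_zero a hK halg (k + 1)
  calc fieldDeg (segField K σ a (k + 1)) (segField K σ a (k + 2))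
      = fieldDeg (segField K σ a (k + 1))
          (segField K σ a (k + 1) ⊔ (segField K σ a (k + 1)).map (σ : U →+* U)) := by
        rw [← segField_succ a hK]
    _ ≤ fieldDeg ((segField K σ a k).map (σ : U →+* U))
          ((segField K σ a (k + 1)).map (σ : U →+* U)) :=
        fieldDeg_sup_le_of_le (map_segField_le_succ a hK k)
          ((Subfield.map_le_map_iff _).2 (segField_le_succ a hK k)) hne
    _ = fieldDeg (segField K σ a k) (segField K σ a (k + 1)) := fieldDeg_map σ _ _

end SegField

theorem exists_isEventualValue_of_antitone {d : ℕ → ℕ} (hd : Antitone d) :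
    ∃ l, IsEventualValue d l := by
  obtain ⟨N, hN⟩ := Nat.sInf_mem (Set.range_nonempty d)
  exact ⟨sInf (Set.range d), N, fun k hk =>
    le_antisymm (hN ▸ hd hk) (Nat.sInf_le ⟨k, rfl⟩)⟩

/-- Let `U` be a field with a ring automorphism `σ` and `K` a subfield with
`σ(K) = K`.  If `a` is a tuple of elements algebraic over `K`, then
`ld(a/K) = ild(a/K)`: the two degree sequences have a common eventual value. -/
theorem limit_degree_eq_inverse_limit_degree_of_algebraic {U : Type*} [Field U]
    (σ : U ≃+* U) (K : Subfield U) (hK : K.map (σ : U →+* U) = K) {n : ℕ}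
    (a : Fin n → U) (halg : ∀ i, IsAlgebraic ↥K (a i)) :
    ∃ l : ℕ, IsEventualValue (ldSeq K σ a) l ∧ IsEventualValue (ldSeq K σ.symm a) l := by
  obtain ⟨l, hl⟩ :=
    exists_isEventualValue_of_antitone (antitone_nat_of_succ_le (ldSeq_succ_le a hK halg))
  exact ⟨l, hl, ldSeq_symm_eq a hK halg ▸ hl⟩
end
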